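/- Let ℓ : Δ^c × Δ^c → ℝ≥0 be differentiable in its first argument with ‖∇_p ℓ(p, q)‖_1 ≤ M whenever max_k p_k − min_k p_k < 1/c. Fix f ∈ Δ^c with max_k f_k − min_k f_k < 1/c, fix ỹ, and let L(α) = ℓ(P̄_α f, e_ỹ). Then ‖∇_α L(α)‖_1 ≤ (cM/4)(max_k f_k − min_k f_k) for all α ∈ ℝ^c. -/

import Mathlib

open Matrix Finset

noncomputable def softmax {c : ℕ} (α : Fin c → ℝ) : Fin c → ℝ :=
  fun i => Real.exp (α i) / ∑ j, Real.exp (α j)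

/-- Permutation matrix swapping coordinates `a` and `b`. -/
def swapMat {c : ℕ} (a b : Fin c) : Matrix (Fin c) (Fin c) ℝ :=
  fun i j => if Equiv.swap a b i = j then 1 else 0

/-- The instance-dependent permutation layer `P̄_α = ∑ i, S(α)_i P(y, i)`. -/
noncomputable def permLayer {c : ℕ} (α : Fin c → ℝ) (y : Fin c) :
    Matrix (Fin c) (Fin c) ℝ :=
  ∑ i, softmax α i • swapMat y i

/-!
Write `P̄_β f = ∑ i, S(β)_i (f ∘ swap y i)`. The `j`-th partial derivative of
`β ↦ P̄_β f` is `S(β)_j (f ∘ swap y j - P̄_β f)`, and each coordinate of `f ∘ swap y j - P̄_β f` is a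
convex combination of differences of values of `f` in which the zero difference carries
weight `S(β)_j`. So this partial derivative is bounded coordinatewise by
`S_j (1 - S_j) (max f - min f) ≤ (max f - min f) / 4`. Since `P̄_β f` is a convex combination
of rearrangements of `f`, its range is at most that of `f`, so the bound `M` on the gradient
of `ℓ` applies at `P̄_β f`; the chain rule and a sum over the `c` coordinates `j` finish.
-/

open Real ContinuousLinearMap

section Softmax
variable {c : ℕ}

theorem softmax_nonneg (α : Fin c → ℝ) (i : Fin c) : 0 ≤ softmax α i := by
  unfold softmax; positivity

variable [NeZero c]

theorem sum_exp_pos (α : Fin c → ℝ) : 0 < ∑ j, exp (α j) :=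
  Finset.sum_pos (fun _ _ => exp_pos _) univ_nonempty

theorem sum_softmax (α : Fin c → ℝ) : ∑ i, softmax α i = 1 := by
  simp only [softmax, ← Finset.sum_div, div_self (sum_exp_pos α).ne']

theorem hasFDerivAt_softmax_dotProduct (w α : Fin c → ℝ) :
    HasFDerivAt (fun β => softmax β ⬝ᵥ w)
      (∑ j, (softmax α j * (w j - softmax α ⬝ᵥ w)) •
        (proj j : (Fin c → ℝ) →L[ℝ] ℝ)) α := by
  have hnum : HasFDerivAt (fun β : Fin c → ℝ => ∑ i, exp (β i) * w i)
      (∑ i, w i • exp (α i) • (proj i : (Fin c → ℝ) →L[ℝ] ℝ)) α :=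
    HasFDerivAt.fun_sum fun i _ => (hasFDerivAt_apply i α).exp.mul_const (w i)
  have hden : HasFDerivAt (fun β : Fin c → ℝ => ∑ i, exp (β i))
      (∑ i, exp (α i) • (proj i : (Fin c → ℝ) →L[ℝ] ℝ)) α :=
    HasFDerivAt.fun_sum fun i _ => (hasFDerivAt_apply i α).exp
  have hquot := hnum.mul ((hasDerivAt_inv (sum_exp_pos α).ne').comp_hasFDerivAt α hden)
  have hsoftmax : (fun β => softmax β ⬝ᵥ w) =
      fun β => (∑ i, exp (β i) * w i) * (∑ i, exp (β i))⁻¹ := by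
    funext β
    simp only [dotProduct, softmax, Finset.sum_mul]
    exact Finset.sum_congr rfl fun i _ => by ring
  rw [hsoftmax]
  refine hquot.congr_fderiv (ContinuousLinearMap.ext fun v => ?_)
  have hd := (sum_exp_pos α).ne'
  simp only [softmax, dotProduct, _root_.add_apply, _root_.smul_apply, _root_.sum_apply,
    proj_apply, smul_eq_mul, Function.comp_apply]
  have hmean : ∑ i, exp (α i) / (∑ j, exp (α j)) * w i =
      (∑ i, exp (α i) * w i) / ∑ j, exp (α j) := by
    rw [Finset.sum_div]; exact Finset.sum_congr rfl fun i _ => div_mul_eq_mul_div _ _ _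
  simp only [hmean, Finset.mul_sum, ← Finset.sum_add_distrib]
  refine Finset.sum_congr rfl fun i _ => ?_
  field_simp
  ring

end Softmax

section ConvexCombination
variable {ι : Type*} [Fintype ι] {w x : ι → ℝ}

theorem dotProduct_mem_Icc (hw : ∀ i, 0 ≤ w i) (hw1 : ∑ i, w i = 1) {a b : ℝ}
    (hx : ∀ i, x i ∈ Set.Icc a b) : w ⬝ᵥ x ∈ Set.Icc a b :=
  (convex_Icc a b).sum_mem (fun i _ => hw i) hw1 fun i _ => hx i

theorem abs_sub_dotProduct_le [DecidableEq ι] (hw : ∀ i, 0 ≤ w i) (hw1 : ∑ i, w i = 1)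
    {R : ℝ} (j : ι) (hR : ∀ i, |x j - x i| ≤ R) : |x j - w ⬝ᵥ x| ≤ (1 - w j) * R := by
  have hsplit : x j - w ⬝ᵥ x = ∑ i ∈ univ.erase j, w i * (x j - x i) := by
    rw [Finset.sum_erase _ (by simp), dotProduct]
    simp only [mul_sub, Finset.sum_sub_distrib, ← Finset.sum_mul, hw1, one_mul]
  calc |x j - w ⬝ᵥ x| ≤ ∑ i ∈ univ.erase j, |w i * (x j - x i)| :=
        hsplit ▸ Finset.abs_sum_le_sum_abs _ _
    _ ≤ ∑ i ∈ univ.erase j, w i * R := Finset.sum_le_sum fun i _ => by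
        rw [abs_mul, abs_of_nonneg (hw i)]
        exact mul_le_mul_of_nonneg_left (hR i) (hw i)
    _ = (1 - w j) * R := by rw [← Finset.sum_mul, Finset.sum_erase_eq_sub (mem_univ j), hw1]

end ConvexCombination

theorem Finset.inf'_le_sup' {ι α : Type*} [Lattice α] {s : Finset ι} (hs : s.Nonempty)
    (f : ι → α) : s.inf' hs f ≤ s.sup' hs f :=
  let ⟨_, ha⟩ := hs
  (inf'_le f ha).trans (le_sup' f ha)

theorem abs_sub_le_sup'_sub_inf' {ι α : Type*} [AddCommGroup α] [LinearOrder α]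
    [IsOrderedAddMonoid α] {s : Finset ι} (hs : s.Nonempty) (f : ι → α) {a b : ι}
    (ha : a ∈ s) (hb : b ∈ s) : |f a - f b| ≤ s.sup' hs f - s.inf' hs f := by
  rw [abs_sub_le_iff]
  constructor <;> apply sub_le_sub <;> first | exact le_sup' f ‹_› | exact inf'_le f ‹_›

theorem ContinuousLinearMap.abs_apply_le_mul_sum {ι : Type*} [Fintype ι] [DecidableEq ι]
    (D : (ι → ℝ) →L[ℝ] ℝ) {v : ι → ℝ} {b : ℝ} (hv : ∀ k, |v k| ≤ b) :
    |D v| ≤ b * ∑ k, |D (Pi.single k 1)| := by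
  have hexpand : D v = ∑ k, v k * D (Pi.single k 1) := by
    conv_lhs => rw [← Finset.univ_sum_single v]
    simp only [map_sum]
    refine Finset.sum_congr rfl fun k _ => ?_
    rw [← smul_eq_mul, ← map_smul, ← Pi.single_smul', smul_eq_mul, mul_one]
  rw [hexpand, Finset.mul_sum]
  refine (Finset.abs_sum_le_sum_abs _ _).trans (Finset.sum_le_sum fun k _ => ?_)
  rw [abs_mul]
  exact mul_le_mul_of_nonneg_right (hv k) (abs_nonneg _)

section PermLayer
variable {c : ℕ}

theorem swapMat_mulVec (a b : Fin c) (f : Fin c → ℝ) :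
    swapMat a b *ᵥ f = f ∘ Equiv.swap a b := by
  ext k
  simp [swapMat, mulVec, dotProduct]

theorem permLayer_mulVec_apply (α : Fin c → ℝ) (y : Fin c) (f : Fin c → ℝ) (k : Fin c) :
    (permLayer α y *ᵥ f) k = softmax α ⬝ᵥ fun i => f (Equiv.swap y i k) := by
  simp [permLayer, sum_mulVec, smul_mulVec, swapMat_mulVec, dotProduct]

theorem permLayer_mulVec_mem_Icc [NeZero c] (α : Fin c → ℝ) (y : Fin c) (f : Fin c → ℝ)
    (h : (univ : Finset (Fin c)).Nonempty) (k : Fin c) :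
    (permLayer α y *ᵥ f) k ∈ Set.Icc (univ.inf' h f) (univ.sup' h f) := by
  rw [permLayer_mulVec_apply]
  exact dotProduct_mem_Icc (softmax_nonneg α) (sum_softmax α)
    fun i => ⟨inf'_le f (mem_univ _), le_sup' f (mem_univ _)⟩

theorem permLayer_mulVec_sup'_sub_inf'_le [NeZero c] (α : Fin c → ℝ) (y : Fin c)
    (f : Fin c → ℝ) (h : (univ : Finset (Fin c)).Nonempty) :
    univ.sup' h (permLayer α y *ᵥ f) - univ.inf' h (permLayer α y *ᵥ f) ≤
      univ.sup' h f - univ.inf' h f :=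
  sub_le_sub (sup'_le _ _ fun k _ => (permLayer_mulVec_mem_Icc α y f h k).2)
    (le_inf' _ _ fun k _ => (permLayer_mulVec_mem_Icc α y f h k).1)

theorem hasFDerivAt_permLayer_mulVec [NeZero c] (y : Fin c) (f α : Fin c → ℝ) :
    HasFDerivAt (fun β => permLayer β y *ᵥ f)
      (ContinuousLinearMap.pi fun k => ∑ j,
        (softmax α j * (f (Equiv.swap y j k) - (permLayer α y *ᵥ f) k)) •
          (proj j : (Fin c → ℝ) →L[ℝ] ℝ)) α := by
  refine hasFDerivAt_pi.2 fun k => ?_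
  simp only [permLayer_mulVec_apply]
  exact hasFDerivAt_softmax_dotProduct _ α

theorem fderiv_permLayer_mulVec_single [NeZero c] (y j : Fin c) (f α : Fin c → ℝ) :
    fderiv ℝ (fun β => permLayer β y *ᵥ f) α (Pi.single j 1) =
      fun k => softmax α j * (f (Equiv.swap y j k) - (permLayer α y *ᵥ f) k) := by
  ext k
  simp [(hasFDerivAt_permLayer_mulVec y f α).fderiv, Pi.single_apply]

theorem abs_fderiv_comp_permLayer_mulVec_single_le [NeZero c] {g : (Fin c → ℝ) → ℝ}
    (y j : Fin c) (f α : Fin c → ℝ) (h : (univ : Finset (Fin c)).Nonempty)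
    (hg : DifferentiableAt ℝ g (permLayer α y *ᵥ f)) :
    |fderiv ℝ (fun β => g (permLayer β y *ᵥ f)) α (Pi.single j 1)| ≤
      (univ.sup' h f - univ.inf' h f) / 4 *
        ∑ k, |fderiv ℝ g (permLayer α y *ᵥ f) (Pi.single k 1)| := by
  set R := univ.sup' h f - univ.inf' h f
  set S := softmax α j
  have hcoord : ∀ k,
      |S * (f (Equiv.swap y j k) - (permLayer α y *ᵥ f) k)| ≤ S * (1 - S) * R := by
    intro k
    have hspread : ∀ i, |f (Equiv.swap y j k) - f (Equiv.swap y i k)| ≤ R := fun i =>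
      abs_sub_le_sup'_sub_inf' h f (mem_univ _) (mem_univ _)
    rw [abs_mul, abs_of_nonneg (softmax_nonneg α j), mul_assoc, permLayer_mulVec_apply]
    exact mul_le_mul_of_nonneg_left
      (abs_sub_dotProduct_le (x := fun i => f (Equiv.swap y i k)) (softmax_nonneg α)
        (sum_softmax α) j hspread) (softmax_nonneg α j)
  have hquarter : S * (1 - S) * R ≤ R / 4 := by
    have hR : 0 ≤ R := sub_nonneg.2 (inf'_le_sup' h f)
    nlinarith [sq_nonneg (S - 1 / 2)]
  rw [show (fun β => g (permLayer β y *ᵥ f)) = g ∘ fun β => permLayer β y *ᵥ f from rfl,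
    fderiv_comp α hg (hasFDerivAt_permLayer_mulVec y f α).differentiableAt,
    ContinuousLinearMap.comp_apply, fderiv_permLayer_mulVec_single]
  exact (ContinuousLinearMap.abs_apply_le_mul_sum _ hcoord).trans
    (mul_le_mul_of_nonneg_right hquarter (Finset.sum_nonneg fun _ _ => abs_nonneg _))

end PermLayer

theorem permLayer_grad_confidence_bound_general {c : ℕ} (y : Fin c)
    (M : ℝ)
    (ℓ : (Fin c → ℝ) → (Fin c → ℝ) → ℝ)
    (hdiff : ∀ p : Fin c → ℝ,
      DifferentiableAt ℝ (fun q => ℓ q (Pi.single y (1 : ℝ))) p)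
    (hgrad : ∀ p : Fin c → ℝ,
      Finset.univ.sup' ⟨y, Finset.mem_univ y⟩ p -
          Finset.univ.inf' ⟨y, Finset.mem_univ y⟩ p < 1 / c →
      ∑ j, |fderiv ℝ (fun q => ℓ q (Pi.single y (1 : ℝ))) p (Pi.single j 1)| ≤ M)
    (f : Fin c → ℝ)
    (hrange : Finset.univ.sup' ⟨y, Finset.mem_univ y⟩ f -
        Finset.univ.inf' ⟨y, Finset.mem_univ y⟩ f < 1 / c) :
    ∀ α : Fin c → ℝ,
      ∑ j, |fderiv ℝ
          (fun β : Fin c → ℝ => ℓ ((permLayer β y).mulVec f) (Pi.single y (1 : ℝ)))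
          α (Pi.single j 1)| ≤
        c * M / 4 *
          (Finset.univ.sup' ⟨y, Finset.mem_univ y⟩ f -
            Finset.univ.inf' ⟨y, Finset.mem_univ y⟩ f) := by
  intro α
  have : NeZero c := NeZero.of_pos y.pos
  set R := univ.sup' ⟨y, mem_univ y⟩ f - univ.inf' ⟨y, mem_univ y⟩ f
  have hR : 0 ≤ R := sub_nonneg.2 (inf'_le_sup' _ f)
  have hM := hgrad _ ((permLayer_mulVec_sup'_sub_inf'_le α y f _).trans_lt hrange)
  calc _ ≤ ∑ _j : Fin c, R / 4 * M := Finset.sum_le_sum fun j _ =>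
        (abs_fderiv_comp_permLayer_mulVec_single_le y j f α _ (hdiff _)).trans
          (mul_le_mul_of_nonneg_left hM (by positivity))
    _ = c * M / 4 * R := by
        simp only [sum_const, card_univ, Fintype.card_fin, nsmul_eq_mul]; ring

theorem permLayer_grad_confidence_bound {c : ℕ} (hc : 0 < c) (y : Fin c)
    (M : ℝ) (hM : 0 ≤ M)
    (ℓ : (Fin c → ℝ) → (Fin c → ℝ) → ℝ)
    (hdiff : ∀ p : Fin c → ℝ,
      DifferentiableAt ℝ (fun q => ℓ q (Pi.single y (1 : ℝ))) p)
    (hgrad : ∀ p : Fin c → ℝ,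
      Finset.univ.sup' ⟨y, Finset.mem_univ y⟩ p -
          Finset.univ.inf' ⟨y, Finset.mem_univ y⟩ p < 1 / c →
      ∑ j, |fderiv ℝ (fun q => ℓ q (Pi.single y (1 : ℝ))) p (Pi.single j 1)| ≤ M)
    (f : Fin c → ℝ) (hf : ∀ i, 0 ≤ f i) (hfsum : ∑ i, f i = 1)
    (hrange : Finset.univ.sup' ⟨y, Finset.mem_univ y⟩ f -
        Finset.univ.inf' ⟨y, Finset.mem_univ y⟩ f < 1 / c) :
    ∀ α : Fin c → ℝ,
      ∑ j, |fderiv ℝ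
          (fun β : Fin c → ℝ => ℓ ((permLayer β y).mulVec f) (Pi.single y (1 : ℝ)))
          α (Pi.single j 1)| ≤
        c * M / 4 *
          (Finset.univ.sup' ⟨y, Finset.mem_univ y⟩ f -
            Finset.univ.inf' ⟨y, Finset.mem_univ y⟩ f) :=
  permLayer_grad_confidence_bound_general y M ℓ hdiff hgrad f hrange
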